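/- Let G be an abelian group equipped with its Bohr topology (the topological group topology induced by all homomorphisms G → T), and let bG denote its Bohr compactification. Then no injective sequence of points of G converges in bG. -/

import Mathlib

/-- The canonical evaluation map of an abelian group `G` into the product
`𝕋^(Hom(G,𝕋))`.  The Bohr topology of `G` is the topology induced by this map, and
the Bohr compactification `bG` is the closure of its range in this compact product;
in particular a sequence in `G` converges in `bG` iff its image under `bohrEval`
converges in the product. -/
noncomputable def bohrEval (G : Type*) [AddCommGroup G] : G → ((G →+ AddCircle (1 : ℝ)) → AddCircle (1 : ℝ)) :=
  fun g χ => χ g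

/-!
If `a n` converged in `bG`, then so would, pointwise on the compact dual group `Ĝ = Hom(G, 𝕋)`,
the functions `e n : χ ↦ exp (2πi χ (a n))`. For the Haar measure of `Ĝ` these are pairwise
orthogonal, since `conj (e m) * e n` is the character of `Ĝ` given by evaluation at
`a n - a m ≠ 0`, which is nontrivial because characters separate the points of `G`. By dominated
convergence the pointwise limit `ℓ` is then orthogonal to every `e n`, hence to itself, although
`|ℓ| = 1`.
-/

open MeasureTheory Filter Topology ComplexConjugate

section Orthogonal

variable {α 𝕜 : Type*} [MeasurableSpace α] [RCLike 𝕜] {μ : Measure α} [IsFiniteMeasure μ]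

theorem tendsto_integral_mul_of_tendsto_ae {u : ℕ → α → 𝕜} {v h : α → 𝕜} {C D : ℝ}
    (hu : ∀ n, AEStronglyMeasurable (u n) μ) (hu_le : ∀ n, ∀ᵐ x ∂μ, ‖u n x‖ ≤ C)
    (huv : ∀ᵐ x ∂μ, Tendsto (fun n => u n x) atTop (𝓝 (v x)))
    (hh : AEStronglyMeasurable h μ) (hh_le : ∀ᵐ x ∂μ, ‖h x‖ ≤ D) :
    Tendsto (fun n => ∫ x, u n x * h x ∂μ) atTop (𝓝 (∫ x, v x * h x ∂μ)) := by
  refine tendsto_integral_of_dominated_convergence (fun _ => C * D)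
    (fun n => (hu n).mul hh) (integrable_const _) (fun n => ?_) ?_
  · filter_upwards [hu_le n, hh_le] with x hux hhx
    rw [norm_mul]
    exact mul_le_mul hux hhx (norm_nonneg _) ((norm_nonneg _).trans hux)
  · filter_upwards [huv] with x hx using hx.mul_const (h x)

theorem not_ae_exists_tendsto_of_orthogonal [NeZero μ] {e : ℕ → α → 𝕜}
    (he : ∀ n, AEStronglyMeasurable (e n) μ) (he_norm : ∀ n, ∀ᵐ x ∂μ, ‖e n x‖ = 1)
    (he_orth : Pairwise fun m n => ∫ x, conj (e m x) * e n x ∂μ = 0) :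
    ¬ ∀ᵐ x ∂μ, ∃ c, Tendsto (fun n => e n x) atTop (𝓝 c) := by
  intro hconv
  set ℓ : α → 𝕜 := fun x => limUnder atTop fun n => e n x
  have hℓ : ∀ᵐ x ∂μ, Tendsto (fun n => e n x) atTop (𝓝 (ℓ x)) :=
    hconv.mono fun _ => tendsto_nhds_limUnder
  have hℓ_norm : ∀ᵐ x ∂μ, ‖ℓ x‖ = 1 := by
    filter_upwards [hℓ, ae_all_iff.2 he_norm] with x hx hnx
    exact tendsto_nhds_unique hx.norm (by simp [hnx])
  have he_le : ∀ n, ∀ᵐ x ∂μ, ‖e n x‖ ≤ 1 := fun n => (he_norm n).mono fun _ => le_of_eq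
  have hℓ_orth : ∀ n, ∫ x, e n x * conj (ℓ x) ∂μ = 0 := by
    intro n
    have hlim := tendsto_integral_mul_of_tendsto_ae (u := fun m x => conj (e m x))
      (fun m => (he m).star) (fun m => (he_le m).mono fun _ hx => by simpa using hx)
      (hℓ.mono fun _ hx => (RCLike.continuous_conj.tendsto _).comp hx) (he n) (he_le n)
    simp_rw [mul_comm (e n _)]
    refine tendsto_nhds_unique hlim (tendsto_const_nhds.congr' ?_)
    filter_upwards [eventually_gt_atTop n] with m hm using (he_orth hm.ne').symm
  have hlim := tendsto_integral_mul_of_tendsto_ae (h := fun x => conj (ℓ x)) (D := 1) he he_le hℓ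
    (aestronglyMeasurable_of_tendsto_ae _ he hℓ).star (hℓ_norm.mono fun _ hx => by simp [hx])
  have hval : ∫ x, ℓ x * conj (ℓ x) ∂μ = μ.real Set.univ := by
    rw [integral_congr_ae (g := fun _ => (1 : 𝕜))
      (hℓ_norm.mono fun x hx => by simp [RCLike.mul_conj, hx])]
    simp [RCLike.real_smul_eq_coe_mul]
  simp only [hℓ_orth, hval] at hlim
  exact measureReal_univ_ne_zero (μ := μ)
    (by exact_mod_cast tendsto_nhds_unique hlim tendsto_const_nhds)

end Orthogonal

theorem AddChar.integral_eq_zero_of_ne_one {K 𝕜 : Type*} [AddGroup K] [MeasurableSpace K]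
    [MeasurableAdd K] [RCLike 𝕜] {μ : Measure K} [μ.IsAddLeftInvariant] {ψ : AddChar K 𝕜} {k : K}
    (hk : ψ k ≠ 1) : ∫ x, ψ x ∂μ = 0 := by
  have h := integral_add_left_eq_self (μ := μ) ψ k
  simp_rw [AddChar.map_add_eq_mul, integral_const_mul] at h
  by_contra hI
  exact hk ((mul_eq_right₀ hI).1 h)

noncomputable def ratCircleToRealCircle : AddCircle (1 : ℚ) →+ AddCircle (1 : ℝ) :=
  QuotientAddGroup.map _ _ (Rat.castHom ℝ).toAddMonoidHom <| by
    rintro _ ⟨n, rfl⟩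
    exact ⟨n, by simp⟩

theorem ratCircleToRealCircle_injective : Function.Injective ratCircleToRealCircle := by
  rw [injective_iff_map_eq_zero]
  intro x hx
  induction x using QuotientAddGroup.induction_on with
  | H q =>
    obtain ⟨n, hn⟩ := (AddCircle.coe_eq_zero_iff _).1 hx
    refine (AddCircle.coe_eq_zero_iff _).2 ⟨n, ?_⟩
    simp only [zsmul_one, RingHom.toAddMonoidHom_eq_coe, AddMonoidHom.coe_coe,
      Rat.coe_castHom] at hn ⊢
    exact_mod_cast hn

theorem AddCommGroup.exists_addMonoidHom_addCircle_ne_zero {G : Type*} [AddCommGroup G] {g : G}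
    (hg : g ≠ 0) : ∃ χ : G →+ AddCircle (1 : ℝ), χ g ≠ 0 := by
  obtain ⟨c, hc⟩ := CharacterModule.exists_character_apply_ne_zero_of_ne_zero hg
  exact ⟨ratCircleToRealCircle.comp c,
    (map_ne_zero_iff _ ratCircleToRealCircle_injective).2 hc⟩

section CharacterSubgroup

variable (G : Type*) [AddCommGroup G]

/-- The dual group `Ĝ = Hom(G, 𝕋)`, with the topology of pointwise convergence. -/
def characterSubgroup : AddSubgroup (G → AddCircle (1 : ℝ)) :=
  (AddMonoidHom.coeFn G (AddCircle (1 : ℝ))).range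

instance : CompactSpace (characterSubgroup G) :=
  isCompact_iff_compactSpace.1 (AddMonoidHom.isClosed_range_coe G (AddCircle (1 : ℝ))).isCompact

instance : MeasurableSpace (characterSubgroup G) := borel _

instance : BorelSpace (characterSubgroup G) := ⟨rfl⟩

variable {G}

noncomputable def evalChar (g : G) : AddChar (characterSubgroup G) ℂ :=
  (Circle.coeHom.compAddChar AddCircle.toCircle_addChar).compAddMonoidHom
    ((Pi.evalAddMonoidHom (fun _ => AddCircle (1 : ℝ)) g).comp (characterSubgroup G).subtype)

@[simp]
theorem evalChar_apply (g : G) (f : characterSubgroup G) :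
    evalChar g f = (AddCircle.toCircle ((f : G → AddCircle (1 : ℝ)) g) : ℂ) := rfl

theorem continuous_evalChar (g : G) : Continuous (evalChar g) :=
  continuous_subtype_val.comp <| AddCircle.continuous_toCircle.comp <|
    (continuous_apply g).comp continuous_subtype_val

theorem norm_evalChar (g : G) (f : characterSubgroup G) : ‖evalChar g f‖ = 1 :=
  Circle.norm_coe _

theorem conj_evalChar_mul_evalChar (g h : G) (f : characterSubgroup G) :
    conj (evalChar g f) * evalChar h f = evalChar (h - g) f := by
  obtain ⟨_, χ, rfl⟩ := f
  simp [← Circle.coe_inv_eq_conj, ← AddCircle.toCircle_neg, ← Circle.coe_mul,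
    ← AddCircle.toCircle_add, sub_eq_neg_add]

theorem exists_evalChar_ne_one {g : G} (hg : g ≠ 0) : ∃ f, evalChar g f ≠ 1 := by
  obtain ⟨χ, hχ⟩ := AddCommGroup.exists_addMonoidHom_addCircle_ne_zero hg
  refine ⟨⟨χ, χ, rfl⟩, fun h => hχ (AddCircle.injective_toCircle one_ne_zero ?_)⟩
  simpa [← Circle.coe_eq_one] using h

theorem integral_conj_evalChar_mul_evalChar {μ : Measure (characterSubgroup G)}
    [μ.IsAddLeftInvariant] {g h : G} (hgh : g ≠ h) :
    ∫ f, conj (evalChar g f) * evalChar h f ∂μ = 0 := by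
  obtain ⟨f, hf⟩ := exists_evalChar_ne_one (sub_ne_zero.2 hgh.symm)
  simp_rw [conj_evalChar_mul_evalChar]
  exact AddChar.integral_eq_zero_of_ne_one hf

end CharacterSubgroup

/-- No injective sequence of points of an abelian group `G` converges in the Bohr
compactification `bG` (Flor's theorem). -/
theorem stmt15 {G : Type*} [AddCommGroup G] (a : ℕ → G) (ha : Function.Injective a) :
    ¬ ∃ L : (G →+ AddCircle (1 : ℝ)) → AddCircle (1 : ℝ),
        Filter.Tendsto (fun n => bohrEval G (a n)) Filter.atTop (nhds L) := by
  rintro ⟨L, hL⟩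
  refine not_ae_exists_tendsto_of_orthogonal (μ := Measure.addHaar) (e := fun n => evalChar (a n))
    (fun n => (continuous_evalChar _).aestronglyMeasurable)
    (fun n => ae_of_all _ (norm_evalChar _))
    (fun m n hmn => integral_conj_evalChar_mul_evalChar (ha.ne hmn)) (ae_of_all _ ?_)
  rintro ⟨_, χ, rfl⟩
  exact ⟨_, (continuous_subtype_val.tendsto _).comp <|
    (AddCircle.continuous_toCircle.tendsto _).comp (tendsto_pi_nhds.1 hL χ)⟩
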